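/- arXiv:math/0404151 — 4 statements merged into one kernel-verified Lean document; each statement's English description precedes it below -/
import Mathlib

section
/- Every ω₁-Hausdorff gap contains a Hausdorff gap: if g = ((a_i)_{i∈I}, (b_j)_{j∈J}) is a pre-gap that is ω₁-Hausdorff, then there exists an uncountable set I' ⊆ I such that for every α ∈ J and every n ∈ ω, the set {β ∈ I' : β < α and a_β \ n ⊆ b_α} is finite (that is, the restriction of g to (I', J) satisfies the Hausdorff condition). -/
open Set Filter

/-- The first uncountable ordinal. -/
noncomputable def omega1 : Ordinal := (Cardinal.aleph 1).ord

/-- `a ⊆* b` : almost inclusion of subsets of `ω`. -/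
def AlSub (a b : Set ℕ) : Prop := (a \ b).Finite

/-- The excess number `X(a,b)` : the least `k` such that `a \ b ⊆ {0,…,k-1}`. -/
noncomputable def excess (a b : Set ℕ) : ℕ := sInf {k | ∀ m ∈ a \ b, m < k}

/-- `D` is a club subset of `ω₁` : it is closed under suprema of its (nonempty)
bounded subsets and unbounded in `ω₁`. -/
def IsClubOmega1 (D : Set Ordinal) : Prop :=
  D ⊆ Iio omega1 ∧
  (∀ s ⊆ D, s.Nonempty → sSup s < omega1 → sSup s ∈ D) ∧
  (∀ α < omega1, ∃ δ ∈ D, α < δ)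

/-- `S` is a stationary subset of `ω₁` : it meets every club. -/
def IsStationaryOmega1 (S : Set Ordinal) : Prop :=
  S ⊆ Iio omega1 ∧ ∀ D, IsClubOmega1 D → (S ∩ D).Nonempty

/-- `((a_i)_{i ∈ I}, (b_j)_{j ∈ J})` is a pre-gap: `I, J ⊆ ω₁` are uncountable,
the `a_i, b_j` are infinite subsets of `ω`, and
`a_{i₀} ⊆* a_{i₁} ⊆* b_{j₁} ⊆* b_{j₀}` whenever `i₀ < i₁` in `I`, `j₀ < j₁` in `J`. -/
def IsPregap (I J : Set Ordinal) (a b : Ordinal → Set ℕ) : Prop :=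
  I ⊆ Iio omega1 ∧ J ⊆ Iio omega1 ∧ ¬ I.Countable ∧ ¬ J.Countable ∧
  (∀ i ∈ I, (a i).Infinite) ∧ (∀ j ∈ J, (b j).Infinite) ∧
  (∀ i₀ ∈ I, ∀ i₁ ∈ I, i₀ < i₁ → AlSub (a i₀) (a i₁)) ∧
  (∀ i ∈ I, ∀ j ∈ J, AlSub (a i) (b j)) ∧
  (∀ j₀ ∈ J, ∀ j₁ ∈ J, j₀ < j₁ → AlSub (b j₁) (b j₀))

/-- `x` is an interpolation of the pre-gap: `a_i ⊆* x ⊆* b_j` for all `i ∈ I`, `j ∈ J`. -/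
def IsInterpolation (I J : Set Ordinal) (a b : Ordinal → Set ℕ) (x : Set ℕ) : Prop :=
  (∀ i ∈ I, AlSub (a i) x) ∧ ∀ j ∈ J, AlSub x (b j)

/-- The pre-gap is `S`-Hausdorff: for some club `D`, for every limit `δ ∈ S ∩ D`,
every `j ∈ J` with `j ≥ δ`, and every strictly increasing sequence `(i n)` of
elements of `I ∩ δ` cofinal in `δ`, `X(a_{i n}, b_j) → ∞`. -/
def SHausdorff (S I J : Set Ordinal) (a b : Ordinal → Set ℕ) : Prop :=
  ∃ D, IsClubOmega1 D ∧ ∀ δ ∈ S ∩ D, Order.IsSuccLimit δ →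
    ∀ j ∈ J, δ ≤ j →
      ∀ i : ℕ → Ordinal, StrictMono i → (∀ n, i n ∈ I ∩ Iio δ) →
        (∀ β < δ, ∃ n, β ≤ i n) →
        Tendsto (fun n => excess (a (i n)) (b j)) atTop atTop



lemma isLimit_omega1 : Order.IsSuccLimit omega1 :=
  Cardinal.isSuccLimit_ord (Cardinal.aleph0_le_aleph 1)

lemma countable_Iio_of_lt_omega1 {o : Ordinal} (h : o < omega1) : (Set.Iio o).Countable := by
  rw [Cardinal.countable_iff_lt_aleph_one, Ordinal.mk_Iio_ordinal, Cardinal.lift_lt_aleph_one]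
  exact Cardinal.lt_ord.mp h

lemma sSup_lt_omega1 {s : Set Ordinal} (hc : s.Countable) (hs : s ⊆ Set.Iio omega1) :
    sSup s < omega1 := by
  rcases s.eq_empty_or_nonempty with rfl | hne
  · simpa using isLimit_omega1.pos
  · obtain ⟨f, rfl⟩ := hc.exists_eq_range hne
    rw [sSup_range]
    exact (by rw [omega1, Cardinal.ord_aleph]; exact Ordinal.iSup_lt_omega_one fun n => by have := hs (Set.mem_range_self n); rwa [Set.mem_Iio, omega1, Cardinal.ord_aleph] at this)

lemma exists_gt_of_not_countable {s : Set Ordinal} (hs : s ⊆ Set.Iio omega1)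
    (hu : ¬ s.Countable) {α : Ordinal} (hα : α < omega1) : ∃ x ∈ s, α < x := by
  by_contra h
  push_neg at h
  apply hu
  refine (countable_Iio_of_lt_omega1 (isLimit_omega1.succ_lt hα)).mono fun x hx => ?_
  exact lt_of_le_of_lt (h x hx) (Order.lt_succ α)

lemma club_not_countable {D : Set Ordinal} (hD : IsClubOmega1 D) : ¬ D.Countable := by
  intro hc
  obtain ⟨δ, hδD, hδ⟩ := hD.2.2 _ (sSup_lt_omega1 hc hD.1)
  exact absurd (le_csSup ⟨omega1, fun x hx => (hD.1 hx).le⟩ hδD) (not_le.2 hδ)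

noncomputable def enumSeq (S : Set Ordinal) : ℕ → Ordinal
  | n => sInf {x | x ∈ S ∧ ∀ k, k < n → enumSeq S k < x}

lemma enumSeq_spec {S : Set Ordinal} (hS : S.Infinite) :
    ∀ n, {x | x ∈ S ∧ ∀ k, k < n → enumSeq S k < x}.Infinite := by
  intro n
  induction n with
  | zero =>
      have h : {x | x ∈ S ∧ ∀ k, k < 0 → enumSeq S k < x} = S := by ext x; simp
      rw [h]; exact hS
  | succ n ih =>
      have key : {x | x ∈ S ∧ ∀ k, k < n → enumSeq S k < x} \ {enumSeq S n} ⊆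
          {x | x ∈ S ∧ ∀ k, k < n + 1 → enumSeq S k < x} := by
        rintro x ⟨hx, hne⟩
        refine ⟨hx.1, fun k hk => ?_⟩
        rcases Nat.lt_succ_iff_lt_or_eq.mp hk with h | rfl
        · exact hx.2 k h
        · have hle : enumSeq S k ≤ x := by
            rw [enumSeq]; exact csInf_le (OrderBot.bddBelow _) hx
          exact lt_of_le_of_ne hle fun heq => hne (by simp [heq.symm])
      exact (ih.diff (Set.finite_singleton _)).mono key

lemma enumSeq_mem' {S : Set Ordinal} (hS : S.Infinite) (n : ℕ) :
    enumSeq S n ∈ {x | x ∈ S ∧ ∀ k, k < n → enumSeq S k < x} := by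
  rw [enumSeq]; exact csInf_mem (enumSeq_spec hS n).nonempty

lemma enumSeq_mem {S : Set Ordinal} (hS : S.Infinite) (n : ℕ) : enumSeq S n ∈ S :=
  (enumSeq_mem' hS n).1

lemma enumSeq_strictMono {S : Set Ordinal} (hS : S.Infinite) : StrictMono (enumSeq S) :=
  strictMono_nat_of_lt_succ fun n => (enumSeq_mem' hS (n + 1)).2 n (Nat.lt_succ_self n)

/-- Every `ω₁`-Hausdorff pre-gap contains a Hausdorff gap: there is an
uncountable `I' ⊆ I` such that for every `α ∈ J` and `n ∈ ω`, the set
`{β ∈ I' : β < α ∧ a_β \ n ⊆ b_α}` is finite. -/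
theorem omega1Hausdorff_contains_Hausdorff
    (I J : Set Ordinal) (a b : Ordinal → Set ℕ)
    (hg : IsPregap I J a b)
    (hH : SHausdorff (Iio omega1) I J a b) :
    ∃ I' ⊆ I, ¬ I'.Countable ∧
      ∀ α ∈ J, ∀ n : ℕ,
        {β | β ∈ I' ∧ β < α ∧ ∀ m ∈ a β, n ≤ m → m ∈ b α}.Finite := by
  obtain ⟨D, hD, hDH⟩ := hH
  obtain ⟨hI1, -, hI2, -⟩ := hg
  set f : Ordinal → Ordinal := fun d => sInf (I ∩ Set.Ioi d) with hf_def
  have hIunb : ∀ d, d < omega1 → (I ∩ Set.Ioi d).Nonempty := by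
    intro d hd
    obtain ⟨x, hxI, hx⟩ := exists_gt_of_not_countable hI1 hI2 hd
    exact ⟨x, hxI, hx⟩
  have hf : ∀ d ∈ D, f d ∈ I ∧ d < f d := by
    intro d hd
    have := csInf_mem (hIunb d (hD.1 hd))
    exact ⟨this.1, this.2⟩
  refine ⟨f '' D, ?_, ?_, ?_⟩
  · rintro x ⟨d, hd, rfl⟩
    exact (hf d hd).1
  · intro hc
    apply club_not_countable hD
    have hsub : D ⊆ ⋃ β ∈ f '' D, Set.Iio β := fun d hd =>
      Set.mem_biUnion (Set.mem_image_of_mem f hd) (hf d hd).2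
    exact (Set.Countable.biUnion hc fun β hβ => by
      obtain ⟨d, hd, rfl⟩ := hβ
      exact countable_Iio_of_lt_omega1 (hI1 (hf d hd).1)).mono hsub
  · intro α hα n
    rw [← Set.not_infinite]
    intro hinf
    set S : Set Ordinal := {β | β ∈ f '' D ∧ β < α ∧ ∀ m ∈ a β, n ≤ m → m ∈ b α} with hS_def
    set g : ℕ → Ordinal := enumSeq S with hg_def
    have hgmem : ∀ k, g k ∈ S := enumSeq_mem hinf
    have hgmono : StrictMono g := enumSeq_strictMono hinf
    have hgI : ∀ k, g k ∈ I := by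
      intro k
      obtain ⟨dk, hdk, he⟩ := (hgmem k).1
      exact he ▸ (hf dk hdk).1
    have hsep : ∀ k, ∃ d ∈ D, g k ≤ d ∧ d < g (k + 1) := by
      intro k
      obtain ⟨d₂, hd₂, he₂⟩ := (hgmem (k + 1)).1
      refine ⟨d₂, hd₂, ?_, he₂ ▸ (hf d₂ hd₂).2⟩
      by_contra h
      push_neg at h
      have hmem : g k ∈ I ∩ Set.Ioi d₂ := ⟨hgI k, h⟩
      have hle : f d₂ ≤ g k := csInf_le (OrderBot.bddBelow _) hmem
      exact absurd (hgmono (Nat.lt_succ_self k)) (not_lt.2 (he₂ ▸ hle))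
    choose d hdD hdge hdlt using hsep
    set δ : Ordinal := ⨆ k, d k with hδ_def
    have hdle : ∀ k, d k ≤ δ := fun k => le_ciSup (Ordinal.bddAbove_range d) k
    have hgδ : ∀ k, g k < δ := fun k =>
      lt_of_le_of_lt (hdge k) (lt_of_lt_of_le ((hdlt k).trans_le (hdge (k + 1))) (hdle (k + 1)))
    have hδω : δ < omega1 := by rw [omega1, Cardinal.ord_aleph]; exact Ordinal.iSup_lt_omega_one fun k => by have := hD.1 (hdD k); rwa [Set.mem_Iio, omega1, Cardinal.ord_aleph] at this
    have hδD : δ ∈ D := by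
      have h1 : sSup (Set.range d) ∈ D := by
        refine hD.2.1 _ (Set.range_subset_iff.mpr hdD) ⟨d 0, Set.mem_range_self 0⟩ ?_
        rw [sSup_range]; exact hδω
      rwa [sSup_range] at h1
    have hlim : Order.IsSuccLimit δ := by
      rw [Ordinal.isSuccLimit_iff]; refine ⟨?_, Order.isSuccPrelimit_of_succ_lt ?_⟩
      · exact fun h => absurd (hgδ 0) (by simp [h])
      · intro β hβ
        obtain ⟨k, hk⟩ := Ordinal.lt_iSup_iff.mp hβ
        exact lt_of_le_of_lt (Order.succ_le_of_lt hk) ((hdlt k).trans (hgδ (k + 1)))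
    have hcof : ∀ β, β < δ → ∃ k, β ≤ g k := by
      intro β hβ
      obtain ⟨k, hk⟩ := Ordinal.lt_iSup_iff.mp hβ
      exact ⟨k + 1, (hk.trans (hdlt k)).le⟩
    have hδα : δ ≤ α := Ordinal.iSup_le fun k => ((hdlt k).trans (hgmem (k + 1)).2.1).le
    have htend := hDH δ ⟨hδω, hδD⟩ hlim α hα hδα g hgmono (fun k => ⟨hgI k, hgδ k⟩) hcof
    have hle : ∀ k, excess (a (g k)) (b α) ≤ n := by
      intro k
      apply Nat.sInf_le
      intro m hm
      by_contra hmn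
      push_neg at hmn
      exact hm.2 ((hgmem k).2.2 m hm.1 hmn)
    obtain ⟨k, hk⟩ := (htend.eventually (Filter.eventually_gt_atTop n)).exists
    exact absurd (hle k) (not_le.2 hk)
end

section
/- Every Hausdorff pre-gap is a gap: if g = ((a_i)_{i<ω₁}, (b_j)_{j<ω₁}) is a pre-gap such that for every α < ω₁ and every n ∈ ω the set {β < α : a_β \ n ⊆ b_α} is finite, then g has no interpolation. -/
open Set Filter

/-- Every Hausdorff pre-gap is a gap: if for every `α < ω₁` and `n ∈ ω` the set
`{β < α : a_β \ n ⊆ b_α}` is finite, then the pre-gap has no interpolation. -/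
theorem hausdorff_pregap_is_gap
    (a b : Ordinal → Set ℕ)
    (hg : IsPregap (Iio omega1) (Iio omega1) a b)
    (hH : ∀ α < omega1, ∀ n : ℕ,
      {β | β < α ∧ ∀ m ∈ a β, n ≤ m → m ∈ b α}.Finite) :
    ¬ ∃ x : Set ℕ, IsInterpolation (Iio omega1) (Iio omega1) a b x := by
  rintro ⟨x, hx1, hx2⟩
  -- choose a bound for each β
  have key : ∀ β : Ordinal, β < omega1 →
      ∃ n : ℕ, (∀ m ∈ a β, m ∉ x → m < n) ∧ (∀ m ∈ x, m ∉ b β → m < n) := by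
    intro β hβ
    have h1 : (a β \ x).Finite := hx1 β hβ
    have h2 : (x \ b β).Finite := hx2 β hβ
    obtain ⟨N, hN⟩ := (h1.union h2).bddAbove
    refine ⟨N + 1, ?_, ?_⟩
    · intro m hm hmx
      exact Nat.lt_succ_of_le (hN (Set.mem_union_left _ ⟨hm, hmx⟩))
    · intro m hm hmb
      exact Nat.lt_succ_of_le (hN (Set.mem_union_right _ ⟨hm, hmb⟩))
  choose! n hn1 hn2 using key
  set T : ℕ → Set Ordinal := fun k => {β | β < omega1 ∧ n β = k} with hT
  -- some fiber is uncountable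
  have hfib : ∃ k, ¬ (T k).Countable := by
    by_contra h
    push_neg at h
    apply hg.2.2.1
    have hsub : Iio omega1 ⊆ ⋃ k, T k := by
      intro β hβ
      exact Set.mem_iUnion.2 ⟨n β, hβ, rfl⟩
    exact (Set.countable_iUnion h).mono hsub
  obtain ⟨k, hk⟩ := hfib
  have hTinf : (T k).Infinite := fun hfin => hk hfin.countable
  let e : ℕ ↪ (T k) := hTinf.natEmbedding
  -- bound the range of e
  have hlt : ∀ m : ℕ, ((e m : Ordinal)) < omega1 := fun m => (e m).2.1
  have hlsub : Ordinal.lsub (fun m : ℕ => (e m : Ordinal)) < omega1 := by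
    apply Cardinal.lsub_lt_ord_lift_of_isRegular Cardinal.isRegular_aleph_one
      (by simpa using Cardinal.aleph0_lt_aleph_one) hlt
  set α₀ : Ordinal := Ordinal.lsub (fun m : ℕ => (e m : Ordinal)) with hα₀
  have hem : ∀ m : ℕ, (e m : Ordinal) < α₀ := fun m => Ordinal.lt_lsub _ m
  -- find α ∈ T k with α₀ ≤ α
  have hIiocnt : (Set.Iio α₀).Countable := by
    rw [Cardinal.countable_iff_lt_aleph_one, Ordinal.mk_Iio_ordinal]
    have h1 : α₀.card < Cardinal.aleph 1 := Cardinal.lt_ord.1 hlsub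
    have h2 := Cardinal.lift_lt.2 h1
    rwa [Cardinal.lift_aleph, Ordinal.lift_one] at h2
  have hex : ∃ α ∈ T k, α₀ ≤ α := by
    by_contra h
    push_neg at h
    exact hk (hIiocnt.mono fun β hβ => h β hβ)
  obtain ⟨α, hαT, hα₀α⟩ := hex
  -- contradiction with hH
  have hfin := hH α hαT.1 k
  apply hfin.not_infinite
  refine Set.infinite_of_injective_forall_mem
    (f := fun m : ℕ => (e m : Ordinal)) ?_ ?_
  · intro m₁ m₂ h
    exact e.injective (Subtype.ext h)
  · intro m
    have hmT := (e m).2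
    refine ⟨lt_of_lt_of_le (hem m) hα₀α, ?_⟩
    intro p hp hkp
    have hpx : p ∈ x := by
      by_contra hpx
      have := hn1 (e m) hmT.1 p hp hpx
      rw [hmT.2] at this
      omega
    by_contra hpb
    have := hn2 α hαT.1 p hpx hpb
    rw [hαT.2] at this
    omega
end

section
/- Every special (Kunen) pre-gap is a gap: if g = ((a_i)_{i<ω₁}, (b_j)_{j<ω₁}) is a pre-gap and n₀ ∈ ω is such that (1) a_α \ n₀ ⊆ b_α for every α < ω₁, and (2) for all α < β < ω₁, (a_α ∪ a_β) \ n₀ ⊄ b_α ∩ b_β (equivalently, a_α \ n₀ ⊄ b_β or a_β \ n₀ ⊄ b_α), then g has no interpolation. -/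
open Set Filter

/-- Every special (Kunen) pre-gap is a gap: if `a_α \ n₀ ⊆ b_α` for every `α`,
and for all `α < β < ω₁` we have `a_α \ n₀ ⊄ b_β` or `a_β \ n₀ ⊄ b_α`,
then the pre-gap has no interpolation. -/
theorem kunen_pregap_is_gap
    (a b : Ordinal → Set ℕ) (n₀ : ℕ)
    (hg : IsPregap (Iio omega1) (Iio omega1) a b)
    (h1 : ∀ α < omega1, ∀ m ∈ a α, n₀ ≤ m → m ∈ b α)
    (h2 : ∀ α β : Ordinal, α < β → β < omega1 →
      (∃ m ∈ a α, n₀ ≤ m ∧ m ∉ b β) ∨ (∃ m ∈ a β, n₀ ≤ m ∧ m ∉ b α)) :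
    ¬ ∃ x : Set ℕ, IsInterpolation (Iio omega1) (Iio omega1) a b x := by
  classical
  rintro ⟨x, hxa, hxb⟩
  obtain ⟨-, -, hI, -⟩ := hg
  have hN : ∀ α : Ordinal, α < omega1 → ∃ N : ℕ,
      (∀ m ∈ a α, m ∉ x → m < N) ∧ (∀ m ∈ x, m ∉ b α → m < N) := by
    intro α hα
    have ha := hxa α hα
    have hb := hxb α hα
    obtain ⟨N, hNub⟩ := (Set.Finite.union ha hb).bddAbove
    refine ⟨N + 1, ?_, ?_⟩
    · intro m hm hm'
      have : m ≤ N := hNub (Or.inl ⟨hm, hm'⟩)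
      omega
    · intro m hm hm'
      have : m ≤ N := hNub (Or.inr ⟨hm, hm'⟩)
      omega
  choose N hNa hNb using hN
  let f : ↥(Iio omega1 : Set Ordinal) → ℕ × Finset ℕ := fun α =>
    (N α.1 α.2, ((Set.finite_Iio (N α.1 α.2)).inter_of_right (a α.1)).toFinset)
  have hninj : ¬ Function.Injective f := by
    intro hinj
    have : Countable ↥(Iio omega1 : Set Ordinal) :=
      Function.Injective.countable hinj
    exact hI (Set.countable_coe_iff.mp this)
  have key : ∀ γ δ : ↥(Iio omega1 : Set Ordinal), f γ = f δ →
      ¬ ∃ m ∈ a γ.1, n₀ ≤ m ∧ m ∉ b δ.1 := by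
    rintro γ δ hfe ⟨m, hma, hm0, hmb⟩
    have hNeq : N γ.1 γ.2 = N δ.1 δ.2 := congrArg Prod.fst hfe
    have hset : a γ.1 ∩ Iio (N γ.1 γ.2) = a δ.1 ∩ Iio (N δ.1 δ.2) := by
      have h := congrArg (fun p : ℕ × Finset ℕ => ((p.2 : Finset ℕ) : Set ℕ)) hfe
      simpa [f, Set.Finite.coe_toFinset] using h
    by_cases hlt : m < N γ.1 γ.2
    · have hmem : m ∈ a δ.1 ∩ Iio (N δ.1 δ.2) := by
        rw [← hset]; exact ⟨hma, hlt⟩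
      exact hmb (h1 δ.1 δ.2 m hmem.1 hm0)
    · have hmx : m ∈ x := by
        by_contra hmx
        exact hlt (hNa γ.1 γ.2 m hma hmx)
      have := hNb δ.1 δ.2 m hmx hmb
      omega
  obtain ⟨α, β, hfe, hne⟩ := Function.not_injective_iff.mp hninj
  rcases lt_trichotomy α.1 β.1 with h | h | h
  · rcases h2 α.1 β.1 h β.2 with hc | hc
    · exact key α β hfe hc
    · exact key β α hfe.symm hc
  · exact hne (Subtype.ext h)
  · rcases h2 β.1 α.1 h α.2 with hc | hc
    · exact key β α hfe.symm hc
    · exact key α β hfe hc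
end

section
/- Suppose g = ((A_i)_{i∈I}, (B_j)_{j∈J}) is a pre-gap such that for every i ∈ I and j ∈ J, if i < j then A_i ⊆ B_j (actual inclusion, not just almost-inclusion). Then g is not a gap, i.e. g has an interpolation. -/
open Set Filter

/-- If a pre-gap satisfies `A_i ⊆ B_j` (actual inclusion) whenever `i ∈ I`,
`j ∈ J` and `i < j`, then it is not a gap: it has an interpolation. -/
theorem pregap_with_inclusions_not_gap
    (I J : Set Ordinal) (A B : Ordinal → Set ℕ)
    (hg : IsPregap I J A B)
    (h : ∀ i ∈ I, ∀ j ∈ J, i < j → A i ⊆ B j) :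
    ∃ x : Set ℕ, IsInterpolation I J A B x := by
  obtain ⟨hI, hJ, hIc, hJc, hAinf, hBinf, hAA, hAB, hBB⟩ := hg
  -- J is unbounded in ω₁
  have hJub : ∀ α, α < omega1 → ∃ j ∈ J, α < j := by
    intro α hα
    by_contra hcon
    push_neg at hcon
    apply hJc
    have hsub : J ⊆ Iio (α + 1) := by
      intro j hj
      exact Order.lt_succ_iff.mpr (hcon j hj)
    refine Set.Countable.mono hsub ?_
    rw [← Cardinal.le_aleph0_iff_set_countable, Ordinal.mk_Iio_ordinal]
    have h1 : (α + 1) < omega1 := by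
      have : Order.IsSuccLimit (Cardinal.aleph 1).ord :=
        Cardinal.isSuccLimit_ord (Cardinal.aleph0_le_aleph 1)
      rw [Ordinal.add_one_eq_succ]; exact this.succ_lt hα
    have h2 : (α + 1).card ≤ Cardinal.aleph0 := by
      have := Cardinal.lt_ord.mp h1
      rw [← Cardinal.succ_aleph0] at this
      exact Order.lt_succ_iff.mp this
    refine le_trans (Cardinal.lift_le.mpr h2) ?_
    simp
  -- the interpolation
  refine ⟨⋃ i ∈ I, A i, ?_, ?_⟩
  · intro i hi
    have : A i \ ⋃ i ∈ I, A i = ∅ := by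
      apply Set.diff_eq_empty.mpr
      exact Set.subset_biUnion_of_mem hi
    rw [AlSub, this]
    exact Set.finite_empty
  · intro j hj
    -- for each m in x, choose i(m) ∈ I with m ∈ A (i m)
    have hch : ∀ m : ℕ, ∃ i : Ordinal, (m ∈ (⋃ i ∈ I, A i) → i ∈ I ∧ m ∈ A i) ∧ i < omega1 := by
      intro m
      by_cases hm : m ∈ ⋃ i ∈ I, A i
      · obtain ⟨i, hiI, hmi⟩ := Set.mem_iUnion₂.mp hm
        exact ⟨i, fun _ => ⟨hiI, hmi⟩, hI hiI⟩
      · exact ⟨j, fun hc => absurd hc hm, hJ hj⟩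
    choose φ hφ hφlt using hch
    -- bound: max of φ m and j
    set g : ℕ → Ordinal := fun m => max (φ m) j with hg
    have hglt : ∀ m, g m < omega1 := fun m => max_lt (hφlt m) (hJ hj)
    have hsup : iSup g < omega1 := by
      have := Ordinal.iSup_lt_omega_one (f := g) (by simpa [omega1, Cardinal.ord_aleph] using hglt)
      simpa [omega1, Cardinal.ord_aleph] using this
    obtain ⟨j', hj'J, hj'⟩ := hJub _ hsup
    have hjj' : j < j' := lt_of_le_of_lt (le_trans (le_max_right (φ 0) j) (le_ciSup (Ordinal.bddAbove_range g) 0)) hj'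
    have hsubset : (⋃ i ∈ I, A i) \ B j ⊆ B j' \ B j := by
      rintro m ⟨hmx, hmB⟩
      refine ⟨?_, hmB⟩
      obtain ⟨hiI, hmi⟩ := hφ m hmx
      have hφj' : φ m < j' :=
        lt_of_le_of_lt (le_trans (le_max_left (φ m) j) (le_ciSup (Ordinal.bddAbove_range g) m)) hj'
      exact h (φ m) hiI j' hj'J hφj' hmi
    exact Set.Finite.subset (hBB j hj j' hj'J hjj') hsubset
end
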